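/- Let J₁ = [x₁, y₁] and J₂ be compact intervals in ℝ and let g ∈ SL(2,ℝ) be such that the Möbius transformation of g maps J₁ onto J₂ preserving orientation. Then g = R · T_{J₂} · g_α · T_{J₁}^{−1} for some R ∈ {I, −I}, where α = log((g^{−1}(∞) − y₁)/(g^{−1}(∞) − x₁)) if g^{−1}(∞) ≠ ∞ and α = 0 otherwise. -/

import Mathlib

open Real

/-- The Möbius action of a 2×2 real matrix on ℝ. -/
noncomputable def moeb (g : Matrix (Fin 2) (Fin 2) ℝ) (z : ℝ) : ℝ :=
  (g 0 0 * z + g 0 1) / (g 1 0 * z + g 1 1)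

/-- T_J for the interval J = [x, y]: the affine map sending [0,1] onto J. -/
noncomputable def TJ (x y : ℝ) : Matrix (Fin 2) (Fin 2) ℝ :=
  !![Real.sqrt (y - x), x / Real.sqrt (y - x); 0, 1 / Real.sqrt (y - x)]

/-- g_α, the orientation-preserving Möbius maps fixing [0,1]. -/
noncomputable def gAlpha (α : ℝ) : Matrix (Fin 2) (Fin 2) ℝ :=
  !![Real.exp (α / 2), 0; Real.exp (α / 2) - Real.exp (-α / 2), Real.exp (-α / 2)]

/-!
Because the image of `[x₁, y₁]` is bounded, neither endpoint is the pole of `g`, so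
`u = c x₁ + d` and `v = c y₁ + d` are nonzero; and `g y₁ - g x₁ = (y₁ - x₁) / (u v) > 0` shows
that `u` and `v` have the same sign, which we may take positive after replacing `g` by `-g`.
The pole `-d / c` gives `(-d/c - y₁) / (-d/c - x₁) = v / u`, so `e^{α/2} = √(v / u)`, and
`u v |J₂| = |J₁|` turns this into `e^{α/2} = v |J₂|^{1/2} / |J₁|^{1/2}` and
`e^{-α/2} = u |J₂|^{1/2} / |J₁|^{1/2}`. With these values `T_{J₂} g_α = g T_{J₁}` holds entrywise.
-/

open Filter Topology Bornology

theorem log_pole_ratio_eq (c d x y : ℝ) :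
    (if c ≠ 0 then Real.log ((-d / c - y) / (-d / c - x)) else 0) =
      Real.log ((c * y + d) / (c * x + d)) := by
  split_ifs with hc
  · rw [show -d / c - y = -(c * y + d) / c by field_simp; ring,
      show -d / c - x = -(c * x + d) / c by field_simp; ring,
      div_div_div_cancel_right₀ hc, neg_div_neg_eq]
  · -- the ratio is `d / d`, whose logarithm is `0` even in the junk case `d = 0`
    rw [not_not] at hc
    subst hc
    by_cases hd : d = 0 <;> simp [hd]

theorem exp_half_log_div_mul_sqrt {u v A B : ℝ} (hu : 0 < u) (hv : 0 < v) (h : u * v * B = A) :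
    Real.exp (Real.log (v / u) / 2) * √A = v * √B := by
  rw [Real.exp_half, Real.exp_log (div_pos hv hu), ← Real.sqrt_mul (div_pos hv hu).le,
    ← h, show v / u * (u * v * B) = v ^ 2 * B by field_simp, Real.sqrt_mul (sq_nonneg v),
    Real.sqrt_sq hv.le]

theorem det_TJ {x y : ℝ} (h : x < y) : (TJ x y).det = 1 := by
  have : √(y - x) ≠ 0 := (Real.sqrt_pos.mpr (sub_pos.mpr h)).ne'
  simp [TJ, Matrix.det_fin_two, this]

section Moebius

variable (g : Matrix (Fin 2) (Fin 2) ℝ)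

@[simp]
theorem moeb_neg : moeb (-g) = moeb g := by
  ext z
  simp only [moeb, Matrix.neg_apply, neg_mul, ← neg_add, neg_div_neg_eq]

theorem moeb_sub_moeb {x y : ℝ} (hx : g 1 0 * x + g 1 1 ≠ 0) (hy : g 1 0 * y + g 1 1 ≠ 0) :
    moeb g y - moeb g x = g.det * (y - x) / ((g 1 0 * x + g 1 1) * (g 1 0 * y + g 1 1)) := by
  rw [moeb, moeb, div_sub_div _ _ hy hx, Matrix.det_fin_two, mul_comm (g 1 0 * y + g 1 1)]
  ring

variable {g}

theorem tendsto_abs_moeb_nhdsNE_atTop {p : ℝ} (hdet : g.det ≠ 0) (hp : g 1 0 * p + g 1 1 = 0) :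
    Tendsto (fun z => |moeb g z|) (𝓝[≠] p) atTop := by
  rw [Matrix.det_fin_two] at hdet
  have hnum : 0 < |g 0 0 * p + g 0 1| := by
    refine abs_pos.mpr fun h => hdet ?_
    linear_combination g 0 0 * hp - g 1 0 * h
  have hden : Tendsto (fun z => |g 1 0 * z + g 1 1|) (𝓝[≠] p) (𝓝[>] 0) := by
    refine tendsto_nhdsWithin_iff.mpr ⟨?_, ?_⟩
    · refine (Continuous.tendsto' (by fun_prop) p 0 ?_).mono_left nhdsWithin_le_nhds
      simp [hp]
    · filter_upwards [self_mem_nhdsWithin] with z hz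
      refine Set.mem_Ioi.mpr <| abs_pos.mpr fun h => hdet ?_
      have hc : g 1 0 = 0 := by
        by_contra hc
        exact hz (mul_left_cancel₀ hc (by linear_combination h - hp))
      have hd : g 1 1 = 0 := by simpa [hc] using hp
      simp [hc, hd]
  have hnum_lim : Tendsto (fun z => |g 0 0 * z + g 0 1|) (𝓝[≠] p) (𝓝 |g 0 0 * p + g 0 1|) :=
    (Continuous.tendsto (by fun_prop) p).mono_left nhdsWithin_le_nhds
  refine (hnum_lim.pos_mul_atTop hnum hden.inv_tendsto_nhdsGT_zero).congr fun z => ?_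
  simp [moeb, div_eq_mul_inv]

theorem moeb_denom_ne_zero_of_isBounded {p : ℝ} {S : Set ℝ} {l : Filter ℝ} [l.NeBot]
    (hdet : g.det ≠ 0) (hl : l ≤ 𝓝[≠] p) (hS : S ∈ l) (hb : IsBounded (moeb g '' S)) :
    g 1 0 * p + g 1 1 ≠ 0 := by
  intro hp
  obtain ⟨C, hC⟩ := isBounded_iff_forall_norm_le.mp hb
  obtain ⟨z, hzC, hzS⟩ :=
    (((tendsto_abs_moeb_nhdsNE_atTop hdet hp).mono_left hl).eventually_gt_atTop C).and hS
      |>.exists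
  exact (hC _ (Set.mem_image_of_mem _ hzS)).not_gt hzC

theorem moeb_denom_mul_pos (hdet : 0 < g.det) {x y : ℝ}
    (hx : g 1 0 * x + g 1 1 ≠ 0) (hy : g 1 0 * y + g 1 1 ≠ 0) (hxy : x < y)
    (hlt : moeb g x < moeb g y) : 0 < (g 1 0 * x + g 1 1) * (g 1 0 * y + g 1 1) := by
  have h := sub_pos.mpr hlt
  rwa [moeb_sub_moeb g hx hy, div_pos_iff_of_pos_left (mul_pos hdet (sub_pos.mpr hxy))] at h

theorem TJ_mul_gAlpha_mul_TJ_inv (hdet : g.det = 1) {x y : ℝ}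
    (hxy : x < y) (hu : 0 < g 1 0 * x + g 1 1) (hv : 0 < g 1 0 * y + g 1 1) :
    TJ (moeb g x) (moeb g y) *
        gAlpha (Real.log ((g 1 0 * y + g 1 1) / (g 1 0 * x + g 1 1))) * (TJ x y)⁻¹ = g := by
  have huv : (g 1 0 * x + g 1 1) * (g 1 0 * y + g 1 1) * (moeb g y - moeb g x) = y - x := by
    rw [moeb_sub_moeb g hu.ne' hv.ne', hdet]
    field_simp
  have hx : g 0 0 * x + g 0 1 = moeb g x * (g 1 0 * x + g 1 1) := (div_mul_cancel₀ _ hu.ne').symm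
  have hy : g 0 0 * y + g 0 1 = moeb g y * (g 1 0 * y + g 1 1) := (div_mul_cancel₀ _ hv.ne').symm
  set u := g 1 0 * x + g 1 1 with hu_def
  set v := g 1 0 * y + g 1 1 with hv_def
  set x' := moeb g x
  set y' := moeb g y
  have hs₁ : 0 < √(y - x) := Real.sqrt_pos.mpr (sub_pos.mpr hxy)
  have hs₂ : 0 < √(y' - x') :=
    Real.sqrt_pos.mpr (pos_of_mul_pos_right (huv ▸ sub_pos.mpr hxy) (mul_pos hu hv).le)
  have hE : Real.exp (Real.log (v / u) / 2) = v * √(y' - x') / √(y - x) :=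
    eq_div_of_mul_eq hs₁.ne' (exp_half_log_div_mul_sqrt hu hv huv)
  have hF : Real.exp (-Real.log (v / u) / 2) = u * √(y' - x') / √(y - x) := by
    refine eq_div_of_mul_eq hs₁.ne' ?_
    rw [← Real.log_inv, inv_div]
    exact exp_half_log_div_mul_sqrt hv hu (by linear_combination huv)
  have hs₁sq : √(y - x) ^ 2 = y - x := Real.sq_sqrt (sub_pos.mpr hxy).le
  have hs₂sq : √(y' - x') ^ 2 = y' - x' := Real.sq_sqrt (Real.sqrt_pos.mp hs₂).le
  suffices TJ x' y' * gAlpha (Real.log (v / u)) = g * TJ x y by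
    rw [this, Matrix.mul_nonsing_inv_cancel_right _ _ (by simp [det_TJ hxy])]
  rw [gAlpha, hE, hF]
  ext i j
  fin_cases i <;> fin_cases j <;> 
    simp only [TJ, one_div, Fin.zero_eta, Fin.isValue, Fin.mk_one, Matrix.mul_apply,
      Matrix.of_apply, Matrix.cons_val', Matrix.cons_val_fin_one, Matrix.cons_val_zero,
      Matrix.cons_val_one, Fin.sum_univ_two, mul_zero, zero_mul, add_zero, zero_add] <;>
    field_simp
  · linear_combination hx - hy + v * hs₂sq - g 0 0 * hs₁sq
  · linear_combination -hx
  · linear_combination hv_def - hu_def - g 1 0 * hs₁sq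
  · linear_combination hu_def

end Moebius

/-- Distortion decomposition: if g ∈ SL(2,ℝ) maps J₁ = [x₁,y₁] onto J₂ = [x₂,y₂]
preserving orientation, then g = ±T_{J₂} g_α T_{J₁}⁻¹ with α the distortion factor. -/
theorem distortion_decomposition (g : Matrix (Fin 2) (Fin 2) ℝ) (hdet : g.det = 1)
    (x₁ y₁ x₂ y₂ : ℝ) (h1 : x₁ < y₁) (h2 : x₂ < y₂)
    (himg : moeb g '' Set.Icc x₁ y₁ = Set.Icc x₂ y₂)
    (hx : moeb g x₁ = x₂) (hy : moeb g y₁ = y₂) :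
    ∃ R ∈ ({1, -1} : Set (Matrix (Fin 2) (Fin 2) ℝ)),
      g = R * (TJ x₂ y₂ *
        gAlpha (if g 1 0 ≠ 0 then
            Real.log ((-g 1 1 / g 1 0 - y₁) / (-g 1 1 / g 1 0 - x₁)) else 0) *
        (TJ x₁ y₁)⁻¹) := by
  have hdet₀ : g.det ≠ 0 := hdet ▸ one_ne_zero
  have hb : IsBounded (moeb g '' Set.Icc x₁ y₁) := himg ▸ Metric.isBounded_Icc x₂ y₂
  have hu := moeb_denom_ne_zero_of_isBounded hdet₀ (nhdsGT_le_nhdsNE x₁) (Icc_mem_nhdsGT h1) hb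
  have hv := moeb_denom_ne_zero_of_isBounded hdet₀ (nhdsLT_le_nhdsNE y₁) (Icc_mem_nhdsLT h1) hb
  have huv := moeb_denom_mul_pos (hdet ▸ one_pos) hu hv h1 (hx ▸ hy ▸ h2)
  rw [log_pole_ratio_eq, ← hx, ← hy]
  rcases hu.lt_or_gt with hneg | hpos
  · refine ⟨-1, by simp, ?_⟩
    have key := TJ_mul_gAlpha_mul_TJ_inv (g := -g) (by simpa [Matrix.det_neg] using hdet) h1
      (by simp only [Matrix.neg_apply]; linarith)
      (by simp only [Matrix.neg_apply]; linarith [neg_of_mul_pos_right huv hneg.le])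
    simp only [moeb_neg, Matrix.neg_apply, neg_mul, ← neg_add, neg_div_neg_eq] at key
    rw [key, neg_one_mul, neg_neg]
  · exact ⟨1, by simp, by rw [one_mul, TJ_mul_gAlpha_mul_TJ_inv hdet h1 hpos
      (pos_of_mul_pos_right huv hpos.le)]⟩
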